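/- Let F(η,γ) denote the set of rooted labeled forests with root set η and non-root vertex set γ (disjoint finite sets), and for a forest f let W(f) = ∏_{(x',y') ∈ E(f)} ν(x'−y') be its edge weight for a symmetric function ν. Then for any fixed x ∈ η: ∑_{f ∈ F(η,γ)} W(f) = ∑_{ξ ⊆ γ} (∏_{y ∈ ξ} ν(x−y)) · ∑_{f ∈ F((η∖{x}) ∪ ξ, γ∖ξ)} W(f). -/

import Mathlib

/-- `G` is a rooted labeled forest on the vertex set `S` with root set `R`:
acyclic, and every connected component contains exactly one root. -/
def IsRootedForest {V : Type*} {S : Finset V} (G : SimpleGraph S) (R : Finset V) : Prop :=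
  G.IsAcyclic ∧ ∀ c : G.ConnectedComponent,
    ∃! r : S, (r : V) ∈ R ∧ G.connectedComponentMk r = c

/-- The total edge weight `∑_{f ∈ F(S as η∪γ, roots R)} ∏_{(x,y) ∈ E(f)} ν(x,y)`
of all rooted labeled forests on the vertex set `S` with root set `R`. -/
noncomputable def forestSum {V : Type*} [Fintype V] (S R : Finset V)
    (ν : V → V → ℝ) (hν : ∀ a b, ν a b = ν b a) : ℝ :=
  ∑ᶠ (G : SimpleGraph S) (_ : IsRootedForest G R),
    ∏ e ∈ G.edgeSet.toFinite.toFinset,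
      Sym2.lift ⟨fun a b : S => ν a b, fun a b => hν a b⟩ e

set_option linter.unusedSectionVars false
set_option linter.unusedVariables false

namespace FD

variable {V : Type*} [Fintype V] [DecidableEq V]

section Defs
variable (η γ : Finset V) (x : V)

/-- inclusion of the erased vertex set into the full vertex set -/
def inc : {v // v ∈ (η ∪ γ).erase x} → {v // v ∈ η ∪ γ} :=
  fun v => ⟨v.1, Finset.mem_of_mem_erase v.2⟩

lemma inc_injective : Function.Injective (inc η γ x) :=
  by intro a b h; have h2 := congrArg Subtype.val h; exact Subtype.ext h2

/-- induced graph after deleting `x` -/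
def del (G : SimpleGraph {v // v ∈ η ∪ γ}) : SimpleGraph {v // v ∈ (η ∪ γ).erase x} :=
  G.comap (inc η γ x)

/-- hom from `del G` to `G` -/
def incHom (G : SimpleGraph {v // v ∈ η ∪ γ}) : del η γ x G →g G :=
  ⟨inc η γ x, fun h => h⟩

open Classical in
/-- the set of neighbors of `x` lying in `γ` -/
noncomputable def xi (hxS : x ∈ η ∪ γ) (G : SimpleGraph {v // v ∈ η ∪ γ}) : Finset V :=
  γ.filter (fun y => ∃ hy : y ∈ η ∪ γ, G.Adj ⟨x, hxS⟩ ⟨y, hy⟩)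

/-- attach `x` to all vertices of `ξ` on top of `G'` -/
def ins (ξ : Finset V) (G' : SimpleGraph {v // v ∈ (η ∪ γ).erase x}) :
    SimpleGraph {v // v ∈ η ∪ γ} :=
  SimpleGraph.fromRel (fun a b => ((a : V) = x ∧ (b : V) ∈ ξ) ∨
    ∃ (ha : (a : V) ∈ (η ∪ γ).erase x) (hb : (b : V) ∈ (η ∪ γ).erase x),
      G'.Adj ⟨a, ha⟩ ⟨b, hb⟩)

end Defs

section Main

variable {η γ : Finset V} {x : V} (hd : Disjoint η γ) (hx : x ∈ η)

include hx in
lemma hxS : x ∈ η ∪ γ := Finset.mem_union_left _ hx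

omit hd hx in
lemma mem_S' {v : V} : v ∈ (η ∪ γ).erase x ↔ v ∈ η ∪ γ ∧ v ≠ x := by
  rw [Finset.mem_erase]; tauto

end Main

section Walks

variable {η γ : Finset V} {x : V} (hxS : x ∈ η ∪ γ)

/-- descend a walk avoiding `x` to the deleted graph -/
def descendWalk (G : SimpleGraph {v // v ∈ η ∪ γ}) :
    ∀ {a b : {v // v ∈ η ∪ γ}} (p : G.Walk a b),
      (⟨x, hxS⟩ : {v // v ∈ η ∪ γ}) ∉ p.support →
      ∀ (ha : (a : V) ∈ (η ∪ γ).erase x) (hb : (b : V) ∈ (η ∪ γ).erase x),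
      (del η γ x G).Walk ⟨(a : V), ha⟩ ⟨(b : V), hb⟩
  | _, _, SimpleGraph.Walk.nil, _, _, _ => SimpleGraph.Walk.nil
  | a, b, SimpleGraph.Walk.cons (v := c) h q, hp, ha, hb => by
    rw [SimpleGraph.Walk.support_cons, List.mem_cons] at hp
    push_neg at hp
    have hcx : (c : V) ≠ x := by
      intro hcx
      exact hp.2 (by rw [show (⟨x, hxS⟩ : {v // v ∈ η ∪ γ}) = c from Subtype.ext hcx.symm]; exact SimpleGraph.Walk.start_mem_support q)
    have hc : (c : V) ∈ (η ∪ γ).erase x := mem_S'.2 ⟨c.2, hcx⟩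
    exact SimpleGraph.Walk.cons (show (del η γ x G).Adj ⟨(a : V), ha⟩ ⟨(c : V), hc⟩ from h)
      (descendWalk G q hp.2 hc hb)

lemma descendWalk_map (G : SimpleGraph {v // v ∈ η ∪ γ}) {a b : {v // v ∈ η ∪ γ}}
    (p : G.Walk a b) :
    ∀ (hp : (⟨x, hxS⟩ : {v // v ∈ η ∪ γ}) ∉ p.support)
      (ha : (a : V) ∈ (η ∪ γ).erase x) (hb : (b : V) ∈ (η ∪ γ).erase x),
      (descendWalk hxS G p hp ha hb).map (incHom η γ x G) = p := by
  induction p with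
  | nil => intro hp ha hb; rfl
  | cons h q ih =>
    intro hp ha hb
    simp only [descendWalk, SimpleGraph.Walk.map_cons]
    congr 1
    apply ih

lemma reach_del (G : SimpleGraph {v // v ∈ η ∪ γ}) {a b : {v // v ∈ η ∪ γ}}
    (p : G.Walk a b) (hp : (⟨x, hxS⟩ : {v // v ∈ η ∪ γ}) ∉ p.support)
    (ha : (a : V) ∈ (η ∪ γ).erase x) (hb : (b : V) ∈ (η ∪ γ).erase x) :
    (del η γ x G).Reachable ⟨(a : V), ha⟩ ⟨(b : V), hb⟩ :=
  ⟨descendWalk hxS G p hp ha hb⟩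

lemma reach_up {G : SimpleGraph {v // v ∈ η ∪ γ}} {a b : {v // v ∈ (η ∪ γ).erase x}}
    (h : (del η γ x G).Reachable a b) : G.Reachable (inc η γ x a) (inc η γ x b) :=
  h.map (incHom η γ x G)

lemma descendWalk_isCycle (G : SimpleGraph {v // v ∈ η ∪ γ}) {a : {v // v ∈ η ∪ γ}}
    (c : G.Walk a a) (hc : c.IsCycle)
    (hp : (⟨x, hxS⟩ : {v // v ∈ η ∪ γ}) ∉ c.support)
    (ha : (a : V) ∈ (η ∪ γ).erase x) :
    (descendWalk hxS G c hp ha ha).IsCycle := by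
  rw [← SimpleGraph.Walk.map_isCycle_iff_of_injective (f := incHom η γ x G)
    (inc_injective η γ x), descendWalk_map]
  exact hc

end Walks

section Main2

variable {η γ : Finset V} {x : V} {ξ : Finset V}
  {G' : SimpleGraph {v // v ∈ (η ∪ γ).erase x}}

lemma ins_adj (hd : Disjoint η γ) (hx : x ∈ η) (hξ : ξ ⊆ γ)
    (a b : {v // v ∈ η ∪ γ}) :
    (ins η γ x ξ G').Adj a b ↔
      ((a : V) = x ∧ (b : V) ∈ ξ) ∨ ((b : V) = x ∧ (a : V) ∈ ξ) ∨
      ∃ (ha : (a : V) ∈ (η ∪ γ).erase x) (hb : (b : V) ∈ (η ∪ γ).erase x),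
        G'.Adj ⟨a, ha⟩ ⟨b, hb⟩ := by
  have hxξ : x ∉ ξ := fun h => (Finset.disjoint_left.mp hd hx) (hξ h)
  rw [ins, SimpleGraph.fromRel_adj]
  constructor
  · rintro ⟨hne, (⟨h1, h2⟩ | ⟨ha, hb, h⟩) | (⟨h1, h2⟩ | ⟨ha, hb, h⟩)⟩
    · exact Or.inl ⟨h1, h2⟩
    · exact Or.inr (Or.inr ⟨ha, hb, h⟩)
    · exact Or.inr (Or.inl ⟨h1, h2⟩)
    · exact Or.inr (Or.inr ⟨hb, ha, h.symm⟩)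
  · rintro (⟨h1, h2⟩ | ⟨h1, h2⟩ | ⟨ha, hb, h⟩)
    · refine ⟨fun hab => ?_, Or.inl (Or.inl ⟨h1, h2⟩)⟩
      rw [← hab, h1] at h2; exact hxξ h2
    · refine ⟨fun hab => ?_, Or.inr (Or.inl ⟨h1, h2⟩)⟩
      rw [hab, h1] at h2; exact hxξ h2
    · refine ⟨fun hab => h.ne ?_, Or.inl (Or.inr ⟨ha, hb, h⟩)⟩
      have h2 := congrArg Subtype.val hab
      exact Subtype.ext h2

lemma ins_adj_x (hd : Disjoint η γ) (hx : x ∈ η) (hξ : ξ ⊆ γ)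
    (hxS : x ∈ η ∪ γ) (b : {v // v ∈ η ∪ γ}) :
    (ins η γ x ξ G').Adj ⟨x, hxS⟩ b ↔ (b : V) ∈ ξ := by
  rw [ins_adj hd hx hξ]
  constructor
  · rintro (⟨_, h2⟩ | ⟨h1, h2⟩ | ⟨ha, _, _⟩)
    · exact h2
    · exact absurd h2 (fun h => (Finset.disjoint_left.mp hd hx) (hξ h))
    · exact absurd ha (fun h => (mem_S'.1 h).2 rfl)
  · exact fun h => Or.inl ⟨rfl, h⟩

lemma del_ins (hd : Disjoint η γ) (hx : x ∈ η) (hξ : ξ ⊆ γ) :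
    del η γ x (ins η γ x ξ G') = G' := by
  ext a b
  show (ins η γ x ξ G').Adj (inc η γ x a) (inc η γ x b) ↔ _
  rw [ins_adj hd hx hξ]
  have hax : ((inc η γ x a : {v // v ∈ η ∪ γ}) : V) ≠ x := (mem_S'.1 a.2).2
  have hbx : ((inc η γ x b : {v // v ∈ η ∪ γ}) : V) ≠ x := (mem_S'.1 b.2).2
  constructor
  · rintro (⟨h1, _⟩ | ⟨h1, _⟩ | ⟨ha, hb, h⟩)
    · exact absurd h1 hax
    · exact absurd h1 hbx
    · convert h using 2 <;> rfl
  · intro h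
    exact Or.inr (Or.inr ⟨a.2, b.2, by convert h using 2 <;> rfl⟩)

end Main2


section Helpers

variable {η γ : Finset V} {x : V}

lemma root_unique {S R : Finset V} {G : SimpleGraph {v // v ∈ S}}
    (hG : IsRootedForest G R) {r₁ r₂ : {v // v ∈ S}}
    (h1 : (r₁ : V) ∈ R) (h2 : (r₂ : V) ∈ R) (h : G.Reachable r₁ r₂) : r₁ = r₂ := by
  obtain ⟨r, _, hu⟩ := hG.2 (G.connectedComponentMk r₂)
  have e1 := hu r₁ ⟨h1, SimpleGraph.ConnectedComponent.sound h⟩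
  have e2 := hu r₂ ⟨h2, rfl⟩
  rw [e1, e2]

lemma exists_root {S R : Finset V} {G : SimpleGraph {v // v ∈ S}}
    (hG : IsRootedForest G R) (v : {v // v ∈ S}) :
    ∃ r : {v // v ∈ S}, (r : V) ∈ R ∧ G.Reachable r v := by
  obtain ⟨r, hr, _⟩ := hG.2 (G.connectedComponentMk v)
  exact ⟨r, hr.1, SimpleGraph.ConnectedComponent.exact hr.2⟩

variable (hxS : x ∈ η ∪ γ)

lemma exists_nbr (G : SimpleGraph {v // v ∈ η ∪ γ}) {v : {v // v ∈ η ∪ γ}}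
    (h : G.Reachable ⟨x, hxS⟩ v) (hv : (⟨x, hxS⟩ : {v // v ∈ η ∪ γ}) ≠ v) :
    ∃ (y : {v // v ∈ η ∪ γ}) (q : G.Walk y v),
      G.Adj ⟨x, hxS⟩ y ∧ (⟨x, hxS⟩ : {v // v ∈ η ∪ γ}) ∉ q.support := by
  obtain ⟨w⟩ := h
  obtain ⟨y, hadj, q, hq⟩ := SimpleGraph.Walk.exists_eq_cons_of_ne hv w.toPath.1
  have hp := w.toPath.2
  rw [hq, SimpleGraph.Walk.cons_isPath_iff] at hp
  exact ⟨y, q, hadj, hp.2⟩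

lemma adj_root_mem (hd : Disjoint η γ) (hx : x ∈ η) {G : SimpleGraph {v // v ∈ η ∪ γ}}
    (hG : IsRootedForest G η) {b : {v // v ∈ η ∪ γ}} (h : G.Adj ⟨x, hxS⟩ b) :
    (b : V) ∈ γ := by
  rcases Finset.mem_union.1 b.2 with hb | hb
  · exact absurd (root_unique hG hx hb h.reachable) h.ne
  · exact hb

lemma mem_xi {G : SimpleGraph {v // v ∈ η ∪ γ}} {y : V} :
    y ∈ xi η γ x hxS G ↔ y ∈ γ ∧ ∃ hy : y ∈ η ∪ γ, G.Adj ⟨x, hxS⟩ ⟨y, hy⟩ := by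
  rw [xi]; classical
  rw [Finset.mem_filter]

lemma xi_subset {G : SimpleGraph {v // v ∈ η ∪ γ}} : xi η γ x hxS G ⊆ γ := by
  intro y hy; exact ((mem_xi hxS).1 hy).1

lemma adj_x_iff_mem_xi (hd : Disjoint η γ) (hx : x ∈ η)
    {G : SimpleGraph {v // v ∈ η ∪ γ}} (hG : IsRootedForest G η)
    (b : {v // v ∈ η ∪ γ}) :
    G.Adj ⟨x, hxS⟩ b ↔ (b : V) ∈ xi η γ x hxS G := by
  rw [mem_xi]
  constructor
  · intro h
    exact ⟨adj_root_mem hxS hd hx hG h, b.2, h⟩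
  · rintro ⟨-, hy, hadj⟩
    exact hadj

lemma xi_ins (hd : Disjoint η γ) (hx : x ∈ η) {ξ : Finset V} (hξ : ξ ⊆ γ)
    {G' : SimpleGraph {v // v ∈ (η ∪ γ).erase x}} :
    xi η γ x hxS (ins η γ x ξ G') = ξ := by
  ext y
  rw [mem_xi]
  constructor
  · rintro ⟨-, hy, hadj⟩
    exact (ins_adj_x hd hx hξ hxS _).1 hadj
  · intro hy
    refine ⟨hξ hy, Finset.mem_union_right _ (hξ hy), ?_⟩
    exact (ins_adj_x hd hx hξ hxS _).2 hy

lemma ins_xi_del (hd : Disjoint η γ) (hx : x ∈ η)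
    {G : SimpleGraph {v // v ∈ η ∪ γ}} (hG : IsRootedForest G η) :
    ins η γ x (xi η γ x hxS G) (del η γ x G) = G := by
  ext a b
  rw [ins_adj hd hx (xi_subset hxS)]
  constructor
  · rintro (⟨h1, h2⟩ | ⟨h1, h2⟩ | ⟨ha, hb, h⟩)
    · have ha : a = ⟨x, hxS⟩ := Subtype.ext h1
      rw [ha]
      exact (adj_x_iff_mem_xi hxS hd hx hG b).2 h2
    · have hb : b = ⟨x, hxS⟩ := Subtype.ext h1
      rw [hb]
      exact ((adj_x_iff_mem_xi hxS hd hx hG a).2 h2).symm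
    · exact h
  · intro h
    by_cases hax : (a : V) = x
    · have ha : a = ⟨x, hxS⟩ := Subtype.ext hax
      refine Or.inl ⟨hax, ?_⟩
      rw [ha] at h
      exact (adj_x_iff_mem_xi hxS hd hx hG b).1 h
    · by_cases hbx : (b : V) = x
      · have hb : b = ⟨x, hxS⟩ := Subtype.ext hbx
        refine Or.inr (Or.inl ⟨hbx, ?_⟩)
        rw [hb] at h
        exact (adj_x_iff_mem_xi hxS hd hx hG a).1 h.symm
      · refine Or.inr (Or.inr ⟨mem_S'.2 ⟨a.2, hax⟩, mem_S'.2 ⟨b.2, hbx⟩, ?_⟩)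
        exact h
end Helpers


section Transfer

variable {η γ : Finset V} {x : V} (hxS : x ∈ η ∪ γ)

/-- In a rooted forest with roots `η.erase x ∪ ξ`-type root sets, two roots reachable
from each other in `del G` are equal; specialized uniqueness statements below. -/
lemma del_root_unique (hd : Disjoint η γ) (hx : x ∈ η)
    {G : SimpleGraph {v // v ∈ η ∪ γ}} (hG : IsRootedForest G η)
    {r₁ r₂ : {v // v ∈ (η ∪ γ).erase x}}
    (h1 : (r₁ : V) ∈ η.erase x ∪ xi η γ x hxS G)
    (h2 : (r₂ : V) ∈ η.erase x ∪ xi η γ x hxS G)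
    (h : (del η γ x G).Reachable r₁ r₂) : r₁ = r₂ := by
  have hup : G.Reachable (inc η γ x r₁) (inc η γ x r₂) := reach_up h
  rcases Finset.mem_union.1 h1 with h1 | h1 <;> rcases Finset.mem_union.1 h2 with h2 | h2
  · exact inc_injective η γ x (root_unique hG (Finset.mem_of_mem_erase h1)
      (Finset.mem_of_mem_erase h2) hup)
  · obtain ⟨-, hy, hadj⟩ := (mem_xi hxS).1 h2
    have hadj' : G.Adj ⟨x, hxS⟩ (inc η γ x r₂) := hadj
    have hr : G.Reachable (⟨x, hxS⟩ : {v // v ∈ η ∪ γ}) (inc η γ x r₁) :=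
      hadj'.reachable.trans hup.symm
    have := root_unique hG hx (Finset.mem_of_mem_erase h1) hr
    exact absurd (congrArg Subtype.val this).symm (Finset.mem_erase.1 h1).1
  · obtain ⟨-, hy, hadj⟩ := (mem_xi hxS).1 h1
    have hadj' : G.Adj ⟨x, hxS⟩ (inc η γ x r₁) := hadj
    have hr : G.Reachable (⟨x, hxS⟩ : {v // v ∈ η ∪ γ}) (inc η γ x r₂) :=
      hadj'.reachable.trans hup
    have := root_unique hG hx (Finset.mem_of_mem_erase h2) hr
    exact absurd (congrArg Subtype.val this).symm (Finset.mem_erase.1 h2).1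
  · by_contra hne
    obtain ⟨-, hy1, hadj₁⟩ := (mem_xi hxS).1 h1
    obtain ⟨-, hy2, hadj₂⟩ := (mem_xi hxS).1 h2
    have hadj₁' : G.Adj ⟨x, hxS⟩ (inc η γ x r₁) := hadj₁
    have hadj₂' : G.Adj ⟨x, hxS⟩ (inc η γ x r₂) := hadj₂
    obtain ⟨w⟩ := h
    have hpm : ((w.toPath.1).map (incHom η γ x G)).IsPath :=
      (SimpleGraph.Walk.map_isPath_iff_of_injective (inc_injective η γ x)).2 w.toPath.2
    have hxpm : (⟨x, hxS⟩ : {v // v ∈ η ∪ γ}) ∉ ((w.toPath.1).map (incHom η γ x G)).support := by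
      rw [SimpleGraph.Walk.support_map]
      intro hmem
      obtain ⟨z, -, hz⟩ := List.mem_map.1 hmem
      exact (Finset.mem_erase.1 z.2).1 (congrArg Subtype.val hz)
    have hPeq := SimpleGraph.isAcyclic_iff_path_unique.1 hG.1
      (SimpleGraph.Path.singleton hadj₂')
      ⟨SimpleGraph.Walk.cons hadj₁' ((w.toPath.1).map (incHom η γ x G)),
        (SimpleGraph.Walk.cons_isPath_iff _ _).2 ⟨hpm, hxpm⟩⟩
    have hsup := congrArg (fun p : G.Path ⟨x, hxS⟩ (inc η γ x r₂) => p.1.support) hPeq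
    simp only [SimpleGraph.Path.singleton, SimpleGraph.Walk.support_cons,
      SimpleGraph.Walk.support_nil] at hsup
    replace hsup : [⟨x, hxS⟩, inc η γ x r₂] =
        ⟨x, hxS⟩ :: ((w.toPath.1).map (incHom η γ x G)).support := hsup
    rw [SimpleGraph.Walk.support_eq_cons ((w.toPath.1).map (incHom η γ x G))] at hsup
    have : inc η γ x r₂ = inc η γ x r₁ := by
      have := List.cons.injEq .. ▸ hsup
      exact (List.cons.inj (List.cons.inj hsup).2).1
    exact hne (inc_injective η γ x this.symm)

/-- deleting the root `x` from a rooted forest gives a rooted forest -/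
lemma forward (hd : Disjoint η γ) (hx : x ∈ η)
    {G : SimpleGraph {v // v ∈ η ∪ γ}} (hG : IsRootedForest G η) :
    IsRootedForest (del η γ x G) (η.erase x ∪ xi η γ x hxS G) := by
  constructor
  · intro v c hc
    exact hG.1 (c.map (incHom η γ x G))
      ((SimpleGraph.Walk.map_isCycle_iff_of_injective (inc_injective η γ x)).2 hc)
  · intro c
    induction c using SimpleGraph.ConnectedComponent.ind with
    | _ v =>
    have hv' : ((inc η γ x v : {v // v ∈ η ∪ γ}) : V) ∈ (η ∪ γ).erase x := v.2
    have key : ∃ r : {v // v ∈ (η ∪ γ).erase x},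
        (r : V) ∈ η.erase x ∪ xi η γ x hxS G ∧ (del η γ x G).Reachable r v := by
      by_cases hreach : G.Reachable ⟨x, hxS⟩ (inc η γ x v)
      · have hvx : (⟨x, hxS⟩ : {v // v ∈ η ∪ γ}) ≠ inc η γ x v :=
          fun he => (Finset.mem_erase.1 v.2).1 (congrArg Subtype.val he).symm
        obtain ⟨y, q, hadj, hq⟩ := exists_nbr hxS G hreach hvx
        have hyγ : (y : V) ∈ γ := adj_root_mem hxS hd hx hG hadj
        have hyξ : (y : V) ∈ xi η γ x hxS G := (mem_xi hxS).2 ⟨hyγ, y.2, hadj⟩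
        have hyx : (y : V) ≠ x := fun hh => hadj.ne (Subtype.ext hh.symm)
        have hy' : (y : V) ∈ (η ∪ γ).erase x := mem_S'.2 ⟨y.2, hyx⟩
        refine ⟨⟨(y : V), hy'⟩, Finset.mem_union_right _ hyξ, ?_⟩
        exact reach_del hxS G q hq hy' v.2
      · obtain ⟨r, hrη, hr⟩ := exists_root hG (inc η γ x v)
        have hrx : (r : V) ≠ x := by
          intro hh
          exact hreach (by rw [show (⟨x, hxS⟩ : {v // v ∈ η ∪ γ}) = r from Subtype.ext hh.symm]; exact hr)
        obtain ⟨w⟩ := hr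
        have hxw : (⟨x, hxS⟩ : {v // v ∈ η ∪ γ}) ∉ (w.toPath.1).support := by
          intro hmem
          exact hreach ⟨(w.toPath.1).dropUntil _ hmem⟩
        have hr' : (r : V) ∈ (η ∪ γ).erase x := mem_S'.2 ⟨r.2, hrx⟩
        refine ⟨⟨(r : V), hr'⟩, Finset.mem_union_left _ (Finset.mem_erase.2 ⟨hrx, hrη⟩), ?_⟩
        exact reach_del hxS G w.toPath.1 hxw hr' v.2
    obtain ⟨r, hrmem, hrr⟩ := key
    refine ⟨r, ⟨hrmem, SimpleGraph.ConnectedComponent.sound hrr⟩, ?_⟩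
    rintro r' ⟨hm', hc'⟩
    exact del_root_unique hxS hd hx hG hm' hrmem
      (SimpleGraph.ConnectedComponent.exact (hc'.trans
        (SimpleGraph.ConnectedComponent.sound hrr).symm))

end Transfer


section Backward

variable {η γ : Finset V} {x : V} (hxS : x ∈ η ∪ γ)

/-- decompose a cycle through `x`: two distinct neighbors of `x` joined by a walk avoiding `x` -/
lemma cycle_at_x_aux (G : SimpleGraph {v // v ∈ η ∪ γ})
    {c : G.Walk ⟨x, hxS⟩ ⟨x, hxS⟩} (hc : c.IsCycle) :
    ∃ (y₁ y₂ : {v // v ∈ η ∪ γ}) (q : G.Walk y₂ y₁),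
      G.Adj ⟨x, hxS⟩ y₁ ∧ G.Adj ⟨x, hxS⟩ y₂ ∧ y₁ ≠ y₂ ∧
      (⟨x, hxS⟩ : {v // v ∈ η ∪ γ}) ∉ q.support := by
  cases c with
  | nil => exact absurd hc SimpleGraph.Walk.IsCycle.not_of_nil
  | @cons _ y₁ _ h₁ p =>
    obtain ⟨y₂, h₂, q, hq⟩ := SimpleGraph.Walk.exists_eq_cons_of_ne h₁.ne p.reverse
    have hnodup : p.support.Nodup := by
      have := hc.2
      rwa [SimpleGraph.Walk.support_cons, List.tail_cons] at this
    have hrevnodup : p.reverse.support.Nodup := by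
      rw [SimpleGraph.Walk.support_reverse]
      exact List.nodup_reverse.2 hnodup
    have hxq : (⟨x, hxS⟩ : {v // v ∈ η ∪ γ}) ∉ q.support := by
      rw [hq, SimpleGraph.Walk.support_cons] at hrevnodup
      exact (List.nodup_cons.1 hrevnodup).1
    have hxy2 : s(⟨x, hxS⟩, y₂) ∈ p.edges := by
      have hm : s(⟨x, hxS⟩, y₂) ∈ p.reverse.edges := by
        rw [hq, SimpleGraph.Walk.edges_cons]; exact List.mem_cons_self
      rwa [SimpleGraph.Walk.edges_reverse, List.mem_reverse] at hm
    have hne : y₁ ≠ y₂ := by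
      intro he
      have hnotin : s(⟨x, hxS⟩, y₁) ∉ p.edges := by
        have hed := hc.edges_nodup
        rw [SimpleGraph.Walk.edges_cons] at hed
        exact (List.nodup_cons.1 hed).1
      have hee : s(⟨x, hxS⟩, y₁) = s((⟨x, hxS⟩ : {v // v ∈ η ∪ γ}), y₂) := by rw [he]
      exact hnotin (by rw [hee]; exact hxy2)
    exact ⟨y₁, y₂, q, h₁, h₂, hne, hxq⟩

include hxS in
/-- attaching `x` to `ξ` on top of a rooted forest gives a rooted forest rooted at `η` -/
lemma backward (hd : Disjoint η γ) (hx : x ∈ η) {ξ : Finset V} (hξ : ξ ⊆ γ)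
    {G' : SimpleGraph {v // v ∈ (η ∪ γ).erase x}}
    (hG' : IsRootedForest G' (η.erase x ∪ ξ)) :
    IsRootedForest (ins η γ x ξ G') η := by
  set G := ins η γ x ξ G' with hGdef
  have hdel : del η γ x G = G' := del_ins hd hx hξ
  have hGdel : IsRootedForest (del η γ x G) (η.erase x ∪ ξ) := by rw [hdel]; exact hG'
  have hmemS' : ∀ {y : {v // v ∈ η ∪ γ}}, (y : V) ∈ ξ → (y : V) ∈ (η ∪ γ).erase x := by
    intro y hy
    exact mem_S'.2 ⟨y.2, fun hh => Finset.disjoint_left.mp hd hx (hξ (hh ▸ hy))⟩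
  constructor
  · intro v c hc
    by_cases hxc : (⟨x, hxS⟩ : {v // v ∈ η ∪ γ}) ∈ c.support
    · have hc' : (c.rotate _ hxc).IsCycle := hc.rotate hxc
      obtain ⟨y₁, y₂, q, h₁, h₂, hne, hxq⟩ := cycle_at_x_aux hxS G hc'
      have hy₁ : (y₁ : V) ∈ ξ := (ins_adj_x hd hx hξ hxS _).1 h₁
      have hy₂ : (y₂ : V) ∈ ξ := (ins_adj_x hd hx hξ hxS _).1 h₂
      have hr := reach_del hxS G q hxq (hmemS' hy₂) (hmemS' hy₁)
      have heq := root_unique hGdel (Finset.mem_union_right _ hy₂)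
        (Finset.mem_union_right _ hy₁) hr
      exact hne (Subtype.ext (congrArg Subtype.val heq).symm)
    · have hvx : (v : V) ≠ x := by
        intro hh
        exact hxc (by rw [show (⟨x, hxS⟩ : {v // v ∈ η ∪ γ}) = v from Subtype.ext hh.symm]; exact c.start_mem_support)
      have hv' : (v : V) ∈ (η ∪ γ).erase x := mem_S'.2 ⟨v.2, hvx⟩
      exact hGdel.1 _ (descendWalk_isCycle hxS G c hc hxc hv')
  · have key : ∀ {r : {v // v ∈ η ∪ γ}}, (r : V) ∈ η → r ≠ ⟨x, hxS⟩ →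
        G.Reachable ⟨x, hxS⟩ r → False := by
      intro r hrη hrx hreach
      obtain ⟨y, q, hadj, hq⟩ := exists_nbr hxS G hreach (fun h => hrx h.symm)
      have hyξ : (y : V) ∈ ξ := (ins_adj_x hd hx hξ hxS _).1 hadj
      have hr' : (r : V) ∈ (η ∪ γ).erase x :=
        mem_S'.2 ⟨r.2, fun hh => hrx (Subtype.ext hh)⟩
      have hreach' := reach_del hxS G q hq (hmemS' hyξ) hr'
      have heq := root_unique hGdel (Finset.mem_union_right _ hyξ)
        (Finset.mem_union_left _ (Finset.mem_erase.2 ⟨fun hh => hrx (Subtype.ext hh), hrη⟩))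
        hreach'
      have hval := congrArg Subtype.val heq
      exact Finset.disjoint_left.mp hd hrη (by rw [← hval]; exact hξ hyξ)
    have huniq : ∀ {r₁ r₂ : {v // v ∈ η ∪ γ}}, (r₁ : V) ∈ η → (r₂ : V) ∈ η →
        G.Reachable r₁ r₂ → r₁ = r₂ := by
      intro r₁ r₂ h1 h2 hr
      by_cases e1 : r₁ = ⟨x, hxS⟩
      · by_cases e2 : r₂ = ⟨x, hxS⟩
        · rw [e1, e2]
        · exact (key h2 e2 (by rw [← e1]; exact hr)).elim
      · by_cases e2 : r₂ = ⟨x, hxS⟩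
        · exact (key h1 e1 (by rw [← e2]; exact hr.symm)).elim
        · obtain ⟨w⟩ := hr
          by_cases hxw : (⟨x, hxS⟩ : {v // v ∈ η ∪ γ}) ∈ (w.toPath.1).support
          · exact (key h1 e1 ⟨((w.toPath.1).takeUntil _ hxw).reverse⟩).elim
          · have hr1' : (r₁ : V) ∈ (η ∪ γ).erase x :=
              mem_S'.2 ⟨r₁.2, fun hh => e1 (Subtype.ext hh)⟩
            have hr2' : (r₂ : V) ∈ (η ∪ γ).erase x :=
              mem_S'.2 ⟨r₂.2, fun hh => e2 (Subtype.ext hh)⟩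
            have hreach' := reach_del hxS G w.toPath.1 hxw hr1' hr2'
            have heq := root_unique hGdel
              (Finset.mem_union_left _ (Finset.mem_erase.2 ⟨fun hh => e1 (Subtype.ext hh), h1⟩))
              (Finset.mem_union_left _ (Finset.mem_erase.2 ⟨fun hh => e2 (Subtype.ext hh), h2⟩))
              hreach'
            have hval := congrArg Subtype.val heq
            exact Subtype.ext hval
    intro c
    induction c using SimpleGraph.ConnectedComponent.ind with
    | _ v =>
    have hex : ∃ r : {v // v ∈ η ∪ γ}, (r : V) ∈ η ∧ G.Reachable r v := by
      by_cases hreach : G.Reachable ⟨x, hxS⟩ v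
      · exact ⟨⟨x, hxS⟩, hx, hreach⟩
      · have hvx : (v : V) ≠ x := by
          intro hh
          exact hreach (by rw [show (⟨x, hxS⟩ : {v // v ∈ η ∪ γ}) = v from Subtype.ext hh.symm])
        have hv' : (v : V) ∈ (η ∪ γ).erase x := mem_S'.2 ⟨v.2, hvx⟩
        obtain ⟨r', hr'mem, hr'⟩ := exists_root hGdel ⟨(v : V), hv'⟩
        rcases Finset.mem_union.1 hr'mem with hm | hm
        · exact ⟨inc η γ x r', Finset.mem_of_mem_erase hm, reach_up hr'⟩
        · exfalso
          have hadj : G.Adj ⟨x, hxS⟩ (inc η γ x r') := (ins_adj_x hd hx hξ hxS _).2 hm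
          exact hreach (hadj.reachable.trans (reach_up hr'))
    obtain ⟨r, hrmem, hrr⟩ := hex
    exact ⟨r, ⟨hrmem, SimpleGraph.ConnectedComponent.sound hrr⟩,
      fun r' hr' => huniq hr'.1 hrmem (SimpleGraph.ConnectedComponent.exact
        (hr'.2.trans (SimpleGraph.ConnectedComponent.sound hrr).symm))⟩

end Backward


section Weights

variable {η γ : Finset V} {x : V} (hxS : x ∈ η ∪ γ)
variable (ν : V → V → ℝ) (hν : ∀ a b, ν a b = ν b a)

include hxS in
lemma edges_with_x (hd : Disjoint η γ) (hx : x ∈ η) {ξ : Finset V} (hξ : ξ ⊆ γ)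
    (G' : SimpleGraph {v // v ∈ (η ∪ γ).erase x}) :
    ((ins η γ x ξ G').edgeSet.toFinite.toFinset).filter
        (fun e => (⟨x, hxS⟩ : {v // v ∈ η ∪ γ}) ∈ e) =
      ξ.attach.image (fun y =>
        s((⟨x, hxS⟩ : {v // v ∈ η ∪ γ}), ⟨y.1, Finset.mem_union_right _ (hξ y.2)⟩)) := by
  apply Finset.ext
  intro e
  induction e using Sym2.ind with
  | _ a b =>
  rw [Finset.mem_filter, Set.Finite.mem_toFinset, Finset.mem_image]
  constructor
  · rintro ⟨hadj, hmem⟩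
    rw [SimpleGraph.mem_edgeSet] at hadj
    rcases Sym2.mem_iff.1 hmem with h | h
    · have hbξ : (b : V) ∈ ξ := (ins_adj_x hd hx hξ hxS _).1 (by rwa [← h] at hadj)
      refine ⟨⟨(b : V), hbξ⟩, Finset.mem_attach _ _, ?_⟩
      rw [← h]
    · have haξ : (a : V) ∈ ξ :=
        (ins_adj_x hd hx hξ hxS _).1 (by rw [← h] at hadj; exact hadj.symm)
      refine ⟨⟨(a : V), haξ⟩, Finset.mem_attach _ _, ?_⟩
      rw [← h, Sym2.eq_swap]
  · rintro ⟨y, -, hy⟩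
    rw [← hy]
    refine ⟨?_, Sym2.mem_mk_left _ _⟩
    rw [SimpleGraph.mem_edgeSet]
    exact (ins_adj_x hd hx hξ hxS _).2 y.2

include hxS in
lemma edges_without_x (hd : Disjoint η γ) (hx : x ∈ η) {ξ : Finset V} (hξ : ξ ⊆ γ)
    (G' : SimpleGraph {v // v ∈ (η ∪ γ).erase x}) :
    ((ins η γ x ξ G').edgeSet.toFinite.toFinset).filter
        (fun e => (⟨x, hxS⟩ : {v // v ∈ η ∪ γ}) ∉ e) =
      G'.edgeSet.toFinite.toFinset.image (Sym2.map (inc η γ x)) := by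
  apply Finset.ext
  intro e
  induction e using Sym2.ind with
  | _ a b =>
  rw [Finset.mem_filter, Set.Finite.mem_toFinset, Finset.mem_image, SimpleGraph.mem_edgeSet]
  constructor
  · rintro ⟨hadj, hmem⟩
    rw [Sym2.mem_iff] at hmem
    push_neg at hmem
    rcases (ins_adj hd hx hξ _ _).1 hadj with ⟨h1, -⟩ | ⟨h1, -⟩ | ⟨ha, hb, h⟩
    · exact absurd (Subtype.ext h1.symm) hmem.1
    · exact absurd (Subtype.ext h1.symm) hmem.2
    · exact ⟨s(⟨(a : V), ha⟩, ⟨(b : V), hb⟩), (Set.Finite.mem_toFinset _).2 h, rfl⟩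
  · rintro ⟨e', he', hmap⟩
    induction e' using Sym2.ind with
    | _ u v =>
    rw [Set.Finite.mem_toFinset, SimpleGraph.mem_edgeSet] at he'
    rw [Sym2.map_pair_eq, Sym2.eq_iff] at hmap
    rcases hmap with ⟨h1, h2⟩ | ⟨h1, h2⟩ <;> subst h1 <;> subst h2
    · refine ⟨(ins_adj hd hx hξ _ _).2 (Or.inr (Or.inr ⟨u.2, v.2, he'⟩)), ?_⟩
      rw [Sym2.mem_iff]
      push_neg
      exact ⟨fun h => (Finset.mem_erase.1 u.2).1 (congrArg Subtype.val h).symm,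
        fun h => (Finset.mem_erase.1 v.2).1 (congrArg Subtype.val h).symm⟩
    · refine ⟨(ins_adj hd hx hξ _ _).2 (Or.inr (Or.inr ⟨v.2, u.2, he'.symm⟩)), ?_⟩
      rw [Sym2.mem_iff]
      push_neg
      exact ⟨fun h => (Finset.mem_erase.1 v.2).1 (congrArg Subtype.val h).symm,
        fun h => (Finset.mem_erase.1 u.2).1 (congrArg Subtype.val h).symm⟩

include hxS in
lemma weight_ins (hd : Disjoint η γ) (hx : x ∈ η) {ξ : Finset V} (hξ : ξ ⊆ γ)
    (G' : SimpleGraph {v // v ∈ (η ∪ γ).erase x}) :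
    ∏ e ∈ (ins η γ x ξ G').edgeSet.toFinite.toFinset,
        Sym2.lift ⟨fun a b : {v // v ∈ η ∪ γ} => ν (a : V) (b : V), fun a b => hν a b⟩ e =
      (∏ y ∈ ξ, ν x y) *
      ∏ e ∈ G'.edgeSet.toFinite.toFinset,
        Sym2.lift ⟨fun a b : {v // v ∈ (η ∪ γ).erase x} => ν (a : V) (b : V),
          fun a b => hν a b⟩ e := by
  classical
  rw [← Finset.prod_filter_mul_prod_filter_not ((ins η γ x ξ G').edgeSet.toFinite.toFinset)
    (fun e => (⟨x, hxS⟩ : {v // v ∈ η ∪ γ}) ∈ e)]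
  congr 1
  · rw [edges_with_x hxS hd hx hξ G', Finset.prod_image]
    · simp only [Sym2.lift_mk]
      exact Finset.prod_attach ξ (fun y => ν x y)
    · intro y _ z _ h
      have h2 := congrArg Subtype.val (Sym2.congr_right.1 h)
      exact Subtype.ext h2
  · rw [edges_without_x hxS hd hx hξ G', Finset.prod_image]
    · refine Finset.prod_congr rfl ?_
      intro e' _
      induction e' using Sym2.ind with
      | _ u v =>
      rw [Sym2.map_pair_eq, Sym2.lift_mk, Sym2.lift_mk]
      rfl
    · intro a _ b _ h
      exact Sym2.map.injective (inc_injective η γ x) h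

end Weights


section Assembly

variable {η γ : Finset V} {x : V}
variable (ν : V → V → ℝ) (hν : ∀ a b, ν a b = ν b a)

lemma forestSum_eq_sum (S R : Finset V) :
    forestSum S R ν hν =
      ∑ G ∈ (Set.toFinite {G : SimpleGraph {v // v ∈ S} | IsRootedForest G R}).toFinset,
        ∏ e ∈ G.edgeSet.toFinite.toFinset,
          Sym2.lift ⟨fun a b : {v // v ∈ S} => ν a b, fun a b => hν a b⟩ e := by
  rw [show forestSum S R ν hν =
      ∑ᶠ G ∈ {G : SimpleGraph {v // v ∈ S} | IsRootedForest G R},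
        ∏ e ∈ G.edgeSet.toFinite.toFinset,
          Sym2.lift ⟨fun a b : {v // v ∈ S} => ν a b, fun a b => hν a b⟩ e from rfl,
    ← Set.Finite.coe_toFinset (Set.toFinite {G : SimpleGraph {v // v ∈ S} | IsRootedForest G R}),
    finsum_mem_coe_finset]
  apply Finset.sum_congr
  · ext G
    simp [Set.Finite.mem_toFinset]
  · intro G _
    rfl

end Assembly

end FD

/-- Proposition 1 (identity (2.3)) of the paper: for disjoint finite sets `η`
(roots) and `γ`, and any fixed root `x ∈ η`,
`∑_{f ∈ F(η,γ)} W(f) = ∑_{ξ ⊆ γ} (∏_{y ∈ ξ} ν(x,y)) ∑_{f ∈ F((η∖{x})∪ξ, γ∖ξ)} W(f)`,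
where the forests in the inner sum live on the vertex set `(η ∪ γ) ∖ {x}`. -/
theorem forest_root_decomposition {V : Type*} [Fintype V] [DecidableEq V]
    (ν : V → V → ℝ) (hν : ∀ a b, ν a b = ν b a)
    (η γ : Finset V) (hd : Disjoint η γ) (x : V) (hx : x ∈ η) :
    forestSum (η ∪ γ) η ν hν =
      ∑ ξ ∈ γ.powerset,
        (∏ y ∈ ξ, ν x y) * forestSum ((η ∪ γ).erase x) ((η.erase x) ∪ ξ) ν hν := by
  classical
  have hxS : x ∈ η ∪ γ := Finset.mem_union_left _ hx
  simp only [FD.forestSum_eq_sum ν hν]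
  simp only [Finset.mul_sum]
  rw [Finset.sum_sigma']
  refine Finset.sum_bij'
    (fun (G : SimpleGraph {v // v ∈ η ∪ γ}) _ =>
      (⟨FD.xi η γ x hxS G, FD.del η γ x G⟩ :
        Σ _ : Finset V, SimpleGraph {v // v ∈ (η ∪ γ).erase x}))
    (fun p _ => FD.ins η γ x p.1 p.2) ?_ ?_ ?_ ?_ ?_
  · intro G hG
    rw [Set.Finite.mem_toFinset] at hG
    rw [Finset.mem_sigma]
    exact ⟨Finset.mem_powerset.2 (FD.xi_subset hxS),
      (Set.Finite.mem_toFinset _).2 (FD.forward hxS hd hx hG)⟩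
  · intro p hp
    rw [Finset.mem_sigma] at hp
    have h2 := hp.2
    rw [Set.Finite.mem_toFinset] at h2
    exact (Set.Finite.mem_toFinset _).2 (FD.backward hxS hd hx
      (Finset.mem_powerset.1 hp.1) h2)
  · intro G hG
    rw [Set.Finite.mem_toFinset] at hG
    exact FD.ins_xi_del hxS hd hx hG
  · intro p hp
    rw [Finset.mem_sigma] at hp
    have hξ := Finset.mem_powerset.1 hp.1
    rw [FD.xi_ins hxS hd hx hξ, FD.del_ins hd hx hξ]
  · intro G hG
    rw [Set.Finite.mem_toFinset] at hG
    have hG' := hG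
    conv_lhs => rw [← FD.ins_xi_del hxS hd hx hG']
    exact FD.weight_ins hxS ν hν hd hx (FD.xi_subset hxS) _
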